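/- The function R : [0, ∞) → [0, ∞), R(φ) = (1/Z(φ)) Σ_{k=0}^∞ k φ^k / g(k)!, is a strictly increasing bijection of [0, ∞) onto [0, ∞). -/

import Mathlib

/-! With weights `c k > 0` (here `c = g(·)!`), `R = N / Z` where `Z(φ) = Σ φ^k / c k` and
`N(φ) = Σ k φ^k / c k`. For `x < y` the ratio of `u k = y^k / c k` to `v k = x^k / c k` increases
with `k`, so symmetrising the double series of `N(y) Z(x) - N(x) Z(y)` in its two indices gives
the terms `(k - j) (u k v j - u j v k) ≥ 0`, positive at `(k, j) = (1, 0)`: `R` is strictly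
increasing. Since `g(k+1) ≤ Γ₊ (k+1)`, shifting the index in `N` gives `N(φ) ≥ φ Z(φ) / Γ₊`, so
`R(φ) ≥ φ / Γ₊`. As `R(0) = 0` and `R` is continuous (the series converge uniformly on compacts
because `g(k)! ≥ Γ₋^k k!`), the intermediate value theorem gives surjectivity. -/

/-- The "generalized factorial" `g(k)! = g(k) ⋯ g(1)`, with `g(0)! = 1`. -/
noncomputable def gFact (g : ℕ → ℝ) : ℕ → ℝ
  | 0 => 1
  | n + 1 => g (n + 1) * gFact g n

/-- The partition function `Z(φ) = Σ_{k=0}^∞ φ^k / g(k)!`. -/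
noncomputable def Zfun (g : ℕ → ℝ) (φ : ℝ) : ℝ := ∑' k : ℕ, φ ^ k / gFact g k

/-- The mean `R(φ) = (1/Z(φ)) Σ_{k=0}^∞ k φ^k / g(k)!`. -/
noncomputable def Rfun (g : ℕ → ℝ) (φ : ℝ) : ℝ :=
  (∑' k : ℕ, (k : ℝ) * φ ^ k / gFact g k) / Zfun g φ

open Set

noncomputable def seriesMean (c : ℕ → ℝ) (φ : ℝ) : ℝ :=
  (∑' k : ℕ, (k : ℝ) * φ ^ k / c k) / ∑' k : ℕ, φ ^ k / c k

lemma Rfun_eq_seriesMean (g : ℕ → ℝ) : Rfun g = seriesMean (gFact g) := rfl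

lemma tsum_pos_of_add_swap {α : Type*} {F : α × α → ℝ} (hF : Summable F)
    (hnonneg : ∀ p : α × α, 0 ≤ F p + F p.swap) {p₀ : α × α} (hp₀ : 0 < F p₀ + F p₀.swap) :
    0 < ∑' p, F p := by
  have hswap : Summable (fun p : α × α => F p.swap) := (Equiv.prodComm α α).summable_iff.2 hF
  have hdouble : ∑' p, (F p + F p.swap) = 2 * ∑' p, F p := by
    rw [hF.tsum_add hswap, two_mul,
      show ∑' p : α × α, F p.swap = ∑' p, F p from (Equiv.prodComm α α).tsum_eq F]
  linarith [(hF.add hswap).tsum_pos hnonneg p₀ hp₀]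

lemma pow_mul_pow_le_pow_mul_pow {x y : ℝ} (hx : 0 ≤ x) (hxy : x ≤ y) {j k : ℕ} (hjk : j ≤ k) :
    x ^ k * y ^ j ≤ y ^ k * x ^ j := by
  obtain ⟨d, rfl⟩ := Nat.exists_eq_add_of_le hjk
  calc x ^ (j + d) * y ^ j = (x * y) ^ j * x ^ d := by ring
    _ ≤ (x * y) ^ j * y ^ d := mul_le_mul_of_nonneg_left (pow_le_pow_left₀ hx hxy d)
      (pow_nonneg (mul_nonneg hx (hx.trans hxy)) j)
    _ = y ^ (j + d) * x ^ j := by ring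

lemma tsum_natCast_mul_mul_tsum_lt {u v : ℕ → ℝ} (hu : Summable u) (hv : Summable v)
    (hku : Summable fun k : ℕ => (k : ℝ) * u k) (hkv : Summable fun k : ℕ => (k : ℝ) * v k)
    (hu0 : 0 ≤ u) (hv0 : 0 ≤ v) (hmono : ∀ j k, j ≤ k → u j * v k ≤ u k * v j)
    {j₀ k₀ : ℕ} (hjk₀ : j₀ < k₀) (hstrict : u j₀ * v k₀ < u k₀ * v j₀) :
    (∑' k : ℕ, (k : ℝ) * v k) * ∑' k, u k < (∑' k : ℕ, (k : ℝ) * u k) * ∑' k, v k := by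
  have hkuv := hku.mul_of_nonneg hv (fun k => mul_nonneg k.cast_nonneg (hu0 k)) hv0
  have hkvu := hkv.mul_of_nonneg hu (fun k => mul_nonneg k.cast_nonneg (hv0 k)) hu0
  rw [← sub_pos, hku.tsum_mul_tsum hv hkuv, hkv.tsum_mul_tsum hu hkvu, ← hkuv.tsum_sub hkvu]
  have hpair (k j : ℕ) : (k * u k * v j - k * v k * u j) + (j * u j * v k - j * v j * u k)
      = ((k : ℝ) - j) * (u k * v j - u j * v k) := by ring
  refine tsum_pos_of_add_swap (hkuv.sub hkvu) (fun ⟨k, j⟩ => ?_) (p₀ := (k₀, j₀)) ?_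
  · rw [Prod.swap_prod_mk, hpair]
    rcases le_total j k with hjk | hkj
    · have : (j : ℝ) ≤ k := by exact_mod_cast hjk
      exact mul_nonneg (by linarith) (by linarith [hmono j k hjk])
    · have : (k : ℝ) ≤ j := by exact_mod_cast hkj
      exact mul_nonneg_of_nonpos_of_nonpos (by linarith) (by linarith [hmono k j hkj])
  · rw [Prod.swap_prod_mk, hpair]
    have : (j₀ : ℝ) < k₀ := by exact_mod_cast hjk₀
    exact mul_pos (by linarith) (by linarith)

section seriesMean

variable {c : ℕ → ℝ}

lemma summable_natCast_mul_pow_div (hc : ∀ k, 0 < c k)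
    (hsum : ∀ r, 0 ≤ r → Summable fun k => r ^ k / c k) {r : ℝ} (hr : 0 ≤ r) :
    Summable fun k : ℕ => (k : ℝ) * r ^ k / c k := by
  refine (hsum (2 * r) (by positivity)).of_nonneg_of_le
    (fun k : ℕ => by have := hc k; positivity) fun k => ?_
  have hk : (k : ℝ) ≤ 2 ^ k := by exact_mod_cast (Nat.lt_two_pow_self (n := k)).le
  rw [mul_pow]
  gcongr
  exact (hc k).le

lemma tsum_pow_div_pos (hc : ∀ k, 0 < c k) (hsum : ∀ r, 0 ≤ r → Summable fun k => r ^ k / c k)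
    {φ : ℝ} (hφ : 0 ≤ φ) : 0 < ∑' k : ℕ, φ ^ k / c k :=
  (hsum φ hφ).tsum_pos (fun k => by have := hc k; positivity) 0 (by simp [hc 0])

lemma continuousOn_tsum_mul_pow_div (hc : ∀ k, 0 < c k) {w : ℕ → ℝ} (hw : ∀ k, 0 ≤ w k)
    {M : ℝ} (hM : Summable fun k => w k * M ^ k / c k) :
    ContinuousOn (fun φ => ∑' k, w k * φ ^ k / c k) (Icc 0 M) := by
  refine continuousOn_tsum (fun k => by fun_prop) hM fun k φ hφ => ?_
  have := hc k
  have := hw k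
  rw [Real.norm_of_nonneg (by have := hφ.1; positivity)]
  gcongr
  exacts [hφ.1, hφ.2]

lemma continuousOn_seriesMean (hc : ∀ k, 0 < c k)
    (hsum : ∀ r, 0 ≤ r → Summable fun k => r ^ k / c k) {M : ℝ} (hM : 0 ≤ M) :
    ContinuousOn (seriesMean c) (Icc 0 M) := by
  have hN := continuousOn_tsum_mul_pow_div hc (fun k => Nat.cast_nonneg k)
    (summable_natCast_mul_pow_div hc hsum hM)
  have hZ : ContinuousOn (fun φ => ∑' k : ℕ, φ ^ k / c k) (Icc 0 M) := by
    simpa using continuousOn_tsum_mul_pow_div (w := 1) hc (fun _ => zero_le_one)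
      (by simpa using hsum M hM)
  exact hN.div hZ fun φ hφ => (tsum_pow_div_pos hc hsum hφ.1).ne'

lemma seriesMean_nonneg (hc : ∀ k, 0 < c k) {φ : ℝ} (hφ : 0 ≤ φ) : 0 ≤ seriesMean c φ :=
  div_nonneg (tsum_nonneg fun k => by have := hc k; positivity)
    (tsum_nonneg fun k => by have := hc k; positivity)

lemma seriesMean_zero : seriesMean c 0 = 0 := by
  have hterm (k : ℕ) : (k : ℝ) * 0 ^ k / c k = 0 := by cases k <;> simp
  simp [seriesMean, hterm]

lemma seriesMean_strictMonoOn (hc : ∀ k, 0 < c k)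
    (hsum : ∀ r, 0 ≤ r → Summable fun k => r ^ k / c k) :
    StrictMonoOn (seriesMean c) (Ici 0) := by
  intro x (hx : 0 ≤ x) y (hy : 0 ≤ y) hxy
  rw [seriesMean, seriesMean, div_lt_div_iff₀ (tsum_pow_div_pos hc hsum hx)
    (tsum_pow_div_pos hc hsum hy)]
  simp only [mul_div_assoc]
  refine tsum_natCast_mul_mul_tsum_lt (hsum y hy) (hsum x hx) ?_ ?_
    (fun k => by have := hc k; positivity) (fun k => by have := hc k; positivity)
    (fun j k hjk => ?_) zero_lt_one ?_
  · simpa only [mul_div_assoc] using summable_natCast_mul_pow_div hc hsum hy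
  · simpa only [mul_div_assoc] using summable_natCast_mul_pow_div hc hsum hx
  · calc y ^ j / c j * (x ^ k / c k) = x ^ k * y ^ j / (c j * c k) := by ring
      _ ≤ y ^ k * x ^ j / (c j * c k) :=
        div_le_div_of_nonneg_right (pow_mul_pow_le_pow_mul_pow hx hxy.le hjk)
          (mul_pos (hc j) (hc k)).le
      _ = y ^ k / c k * (x ^ j / c j) := by ring
  · have := hc 0
    have := hc 1
    simp only [pow_zero, pow_one, div_mul_div_comm, one_mul, mul_one]
    rw [mul_comm (c 1)]
    gcongr

lemma le_mul_seriesMean (hc : ∀ k, 0 < c k)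
    (hsum : ∀ r, 0 ≤ r → Summable fun k => r ^ k / c k) {L : ℝ}
    (hcL : ∀ k : ℕ, c (k + 1) ≤ L * (k + 1) * c k) {φ : ℝ} (hφ : 0 ≤ φ) :
    φ ≤ L * seriesMean c φ := by
  have hN := summable_natCast_mul_pow_div hc hsum hφ
  have hterm (k : ℕ) :
      φ * (φ ^ k / c k) ≤ L * (((k + 1 : ℕ) : ℝ) * φ ^ (k + 1) / c (k + 1)) := by
    rw [show φ * (φ ^ k / c k) = φ ^ (k + 1) / c k by ring,
      show L * (((k + 1 : ℕ) : ℝ) * φ ^ (k + 1) / c (k + 1))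
        = φ ^ (k + 1) * (L * (k + 1)) / c (k + 1) by push_cast; ring,
      div_le_div_iff₀ (hc k) (hc (k + 1)), mul_assoc]
    exact mul_le_mul_of_nonneg_left (hcL k) (pow_nonneg hφ _)
  have hshift : φ * ∑' k : ℕ, φ ^ k / c k ≤ L * ∑' k : ℕ, (k : ℝ) * φ ^ k / c k := by
    rw [hN.tsum_eq_zero_add, ← tsum_mul_left, Nat.cast_zero, zero_mul, zero_div, zero_add,
      ← tsum_mul_left]
    exact Summable.tsum_le_tsum hterm ((hsum φ hφ).mul_left φ)
      ((hN.comp_injective (add_left_injective 1)).mul_left L)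
  rw [seriesMean, mul_div_assoc', le_div_iff₀ (tsum_pow_div_pos hc hsum hφ)]
  linarith

lemma seriesMean_bijOn (hc : ∀ k, 0 < c k)
    (hsum : ∀ r, 0 ≤ r → Summable fun k => r ^ k / c k) {L : ℝ}
    (hcL : ∀ k : ℕ, c (k + 1) ≤ L * (k + 1) * c k) :
    BijOn (seriesMean c) (Ici 0) (Ici 0) := by
  refine ⟨fun φ hφ => seriesMean_nonneg hc hφ, (seriesMean_strictMonoOn hc hsum).injOn,
    fun y (hy : 0 ≤ y) => ?_⟩
  have hL : 0 < L := by
    have h := hcL 0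
    have := hc 0
    have := hc 1
    norm_num at h
    nlinarith
  have hLy : 0 ≤ L * y := by positivity
  have hy_le : y ≤ seriesMean c (L * y) :=
    le_of_mul_le_mul_left (le_mul_seriesMean hc hsum hcL hLy) hL
  obtain ⟨φ, hφ, hφy⟩ := intermediate_value_Icc hLy (continuousOn_seriesMean hc hsum hLy)
    ⟨by rwa [seriesMean_zero], hy_le⟩
  exact ⟨φ, hφ.1, hφy⟩

end seriesMean

lemma add_mul_le_of_le_sub_succ {f : ℕ → ℝ} {a : ℝ} (hf : ∀ k, a ≤ f (k + 1) - f k) (k : ℕ) :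
    f 0 + a * k ≤ f k := by
  induction k with
  | zero => simp
  | succ k ih =>
    push_cast
    linarith [hf k]

lemma le_add_mul_of_sub_succ_le {f : ℕ → ℝ} {b : ℝ} (hf : ∀ k, f (k + 1) - f k ≤ b) (k : ℕ) :
    f k ≤ f 0 + b * k := by
  induction k with
  | zero => simp
  | succ k ih =>
    push_cast
    linarith [hf k]

section gFact

variable {g : ℕ → ℝ} {Γm Γp : ℝ}

lemma pow_mul_factorial_le_gFact (hΓm : 0 ≤ Γm) (hlow : ∀ k : ℕ, Γm * k ≤ g k) (k : ℕ) :
    Γm ^ k * k.factorial ≤ gFact g k := by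
  induction k with
  | zero => simp [gFact]
  | succ k ih =>
    have hgk : 0 ≤ g (k + 1) := (mul_nonneg hΓm (Nat.cast_nonneg _)).trans (hlow (k + 1))
    calc Γm ^ (k + 1) * (k + 1).factorial = (Γm * (k + 1 : ℕ)) * (Γm ^ k * k.factorial) := by
          push_cast [Nat.factorial_succ]; ring
      _ ≤ g (k + 1) * gFact g k := mul_le_mul (hlow (k + 1)) ih (by positivity) hgk
      _ = gFact g (k + 1) := rfl

lemma gFact_pos (hΓm : 0 < Γm) (hlow : ∀ k : ℕ, Γm * k ≤ g k) (k : ℕ) : 0 < gFact g k :=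
  (by positivity : 0 < Γm ^ k * k.factorial).trans_le (pow_mul_factorial_le_gFact hΓm.le hlow k)

lemma summable_pow_div_gFact (hΓm : 0 < Γm) (hlow : ∀ k : ℕ, Γm * k ≤ g k) (r : ℝ)
    (hr : 0 ≤ r) : Summable fun k => r ^ k / gFact g k := by
  refine (Real.summable_pow_div_factorial (r / Γm)).of_nonneg_of_le
    (fun k => by have := gFact_pos hΓm hlow k; positivity) fun k => ?_
  rw [div_pow, div_div]
  gcongr
  exact pow_mul_factorial_le_gFact hΓm.le hlow k

lemma gFact_succ_le (hΓm : 0 < Γm) (hlow : ∀ k : ℕ, Γm * k ≤ g k)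
    (hup : ∀ k : ℕ, g k ≤ Γp * k) (k : ℕ) :
    gFact g (k + 1) ≤ Γp * (k + 1) * gFact g k := by
  have := hup (k + 1)
  push_cast at this
  exact mul_le_mul_of_nonneg_right this (gFact_pos hΓm hlow k).le

end gFact

theorem zrp_density_bijection_general
    (g : ℕ → ℝ) (Γm Γp : ℝ)
    (hΓm : 0 < Γm)
    (hg0 : g 0 = 0)
    (hg : ∀ k : ℕ, 1 ≤ k → Γm ≤ g k - g (k - 1) ∧ g k - g (k - 1) ≤ Γp) :
    StrictMonoOn (Rfun g) (Set.Ici 0) ∧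
    Set.BijOn (Rfun g) (Set.Ici 0) (Set.Ici 0) := by
  have hstep (k : ℕ) : Γm ≤ g (k + 1) - g k ∧ g (k + 1) - g k ≤ Γp := by
    simpa using hg (k + 1) (by omega)
  have hlow (k : ℕ) : Γm * k ≤ g k := by
    simpa [hg0] using add_mul_le_of_le_sub_succ (fun k => (hstep k).1) k
  have hup (k : ℕ) : g k ≤ Γp * k := by
    simpa [hg0] using le_add_mul_of_sub_succ_le (fun k => (hstep k).2) k
  have hc := gFact_pos hΓm hlow
  have hsum := summable_pow_div_gFact hΓm hlow
  rw [Rfun_eq_seriesMean]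
  exact ⟨seriesMean_strictMonoOn hc hsum, seriesMean_bijOn hc hsum (gFact_succ_le hΓm hlow hup)⟩

/-- the function `R : [0,∞) → [0,∞)` is a strictly increasing
bijection of `[0,∞)` onto `[0,∞)`. -/
theorem zrp_density_bijection
    (g : ℕ → ℝ) (Γm Γp : ℝ)
    (hΓm : 0 < Γm) (hΓm1 : Γm ≤ 1) (hΓp : 1 ≤ Γp)
    (hg0 : g 0 = 0)
    (hg : ∀ k : ℕ, 1 ≤ k → Γm ≤ g k - g (k - 1) ∧ g k - g (k - 1) ≤ Γp) :
    StrictMonoOn (Rfun g) (Set.Ici 0) ∧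
    Set.BijOn (Rfun g) (Set.Ici 0) (Set.Ici 0) :=
  zrp_density_bijection_general g Γm Γp hΓm hg0 hg
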